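/- Bound on the quadratic variation term. Let γ ∈ (0,2), T > 0 and G ∈ 𝒮. Then there exists a constant C > 0 such that for every integer n ≥ 1 and every configuration η ∈ Ω = {0,1}^ℤ, sup_{s ∈ [0,T]} (n^γ / (4 n²)) · Σ_{x,y ∈ ℤ} ( G(s, y/n) − G(s, x/n) )² · p(x−y) · c_{x,y}(η) · (η(x) − η(y))² ≤ C · max{ n^{γ−2}, n^{−1} }. -/

import Mathlib

open MeasureTheory Filter Set ENNReal

/-- Normalizing constant `c_γ = (Σ_{z ≠ 0} |z|^{-γ-1})⁻¹`. -/
noncomputable def cGamma (γ : ℝ) : ℝ :=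
  (∑' z : ℤ, if z = 0 then 0 else |(z : ℝ)| ^ (-γ - 1))⁻¹

/-- Transition probability `p(z) = c_γ |z|^{-γ-1}` for `z ≠ 0`, `p(0) = 0`. -/
noncomputable def transP (γ : ℝ) (z : ℤ) : ℝ :=
  if z = 0 then 0 else cGamma γ * |(z : ℝ)| ^ (-γ - 1)

/-- The space of test functions `𝒮 = P([0,T], C_c^∞(ℝ))`:
functions of the form `G(t,u) = Σ_{j=0}^k t^j G_j(u)` with `G_j` smooth compactly supported. -/
def IsTestS (G : ℝ → ℝ → ℝ) : Prop :=
  ∃ k : ℕ, ∃ Gj : ℕ → ℝ → ℝ,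
    (∀ j ≤ k, ContDiff ℝ (⊤ : ℕ∞) (Gj j) ∧ HasCompactSupport (Gj j)) ∧
    ∀ t u : ℝ, G t u = ∑ j ∈ Finset.range (k + 1), t ^ j * Gj j u

/-- The fractional Laplacian `-(-Δ)^{γ/2}` of a function `G : ℝ → ℝ`, defined as
`c_γ · lim_{ε → 0⁺} ∫_{|u-v| ≥ ε} (G(v) - G(u))/|u-v|^{1+γ} dv`. -/
noncomputable def fracLap (γ : ℝ) (G : ℝ → ℝ) (u : ℝ) : ℝ :=
  cGamma γ * limUnder (nhdsWithin 0 (Set.Ioi 0))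
    (fun ε : ℝ => ∫ v in {v : ℝ | ε ≤ |u - v|}, (G v - G u) / |u - v| ^ (1 + γ))

/-- The configuration space `Ω = {0,1}^ℤ`, with `true` meaning an occupied site. -/
abbrev Config := ℤ → Bool

/-- The configuration `η^{x,y}` obtained from `η` by exchanging the values at `x` and `y`. -/
def swapConf (x y : ℤ) (η : Config) : Config :=
  fun z => if z = x then η y else if z = y then η x else η z

/-- Occupation number `η(x) ∈ {0,1}` as a real number. -/
def ind (b : Bool) : ℝ := if b then 1 else 0

/-- The kinetic constraint `c̃_{x,y}(η) = η(x-1) + η(x+1) + η(y-1) + η(y+1)`. -/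
noncomputable def ctilde (x y : ℤ) (η : Config) : ℝ :=
  ind (η (x - 1)) + ind (η (x + 1)) + ind (η (y - 1)) + ind (η (y + 1))

/-- `ν` is the Bernoulli product measure with parameter `b` on `Ω = {0,1}^ℤ`:
a probability measure whose cylinder sets have the i.i.d. Bernoulli(`b`) probabilities. -/
def IsBernoulliProduct (b : ℝ) (ν : MeasureTheory.Measure Config) : Prop :=
  MeasureTheory.IsProbabilityMeasure ν ∧
    ∀ (s : Finset ℤ) (a : ℤ → Bool),
      ν {η : Config | ∀ x ∈ s, η x = a x} =
        ∏ x ∈ s, ENNReal.ofReal (if a x then b else 1 - b)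

/-- The Dirichlet form `𝒟(√f, ν_b) = (1/4) Σ_{x,y} p(x-y) I_{x,y}(√f, ν_b)`, where
`I_{x,y}(√f, ν_b) = ∫ c̃_{x,y}(η) (√f(η^{x,y}) - √f(η))² dν_b`. -/
noncomputable def dirichletForm (γ : ℝ) (ν : MeasureTheory.Measure Config)
    (f : Config → ℝ) : ℝ≥0∞ :=
  (1 / 4) * ∑' q : ℤ × ℤ, ENNReal.ofReal (transP γ (q.1 - q.2)) *
    ∫⁻ η, ENNReal.ofReal (ctilde q.1 q.2 η *
      (Real.sqrt (f (swapConf q.1 q.2 η)) - Real.sqrt (f η)) ^ 2) ∂ν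

/-- The exclusion rate `ξ_{x,y}(η) = η(x)(1-η(y)) + η(y)(1-η(x))`. -/
noncomputable def xiRate (x y : ℤ) (η : Config) : ℝ :=
  ind (η x) * (1 - ind (η y)) + ind (η y) * (1 - ind (η x))

/-- The full jump rate `c_{x,y}(η) = c̃_{x,y}(η) · ξ_{x,y}(η)`. -/
noncomputable def cRate (x y : ℤ) (η : Config) : ℝ := ctilde x y η * xiRate x y η


/- ### Auxiliary lemmas ### -/

lemma myStep (γ : ℝ) (hγ : 0 < γ) {x : ℝ} (hx : 1 ≤ x) :
    γ * (x + 1) ^ (-γ - 1) ≤ x ^ (-γ) - (x + 1) ^ (-γ) := by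
  have hx0 : (0:ℝ) < x := lt_of_lt_of_le one_pos hx
  obtain ⟨c, hc, hder⟩ := exists_hasDerivAt_eq_slope (fun t : ℝ => t ^ (-γ))
      (fun t : ℝ => (-γ) * t ^ (-γ - 1)) (by linarith : x < x + 1)
      (by
        apply ContinuousOn.rpow_const continuousOn_id
        intro t ht
        exact Or.inl (by simp only [id]; nlinarith [ht.1]))
      (by
        intro t ht
        exact Real.hasDerivAt_rpow_const (Or.inl (by nlinarith [ht.1])))
  have hc0 : 0 < c := by nlinarith [hc.1]
  have hmono : (x+1) ^ (-γ - 1) ≤ c ^ (-γ - 1) :=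
    Real.rpow_le_rpow_of_nonpos hc0 (le_of_lt hc.2) (by linarith)
  have hslope : (-γ) * c ^ (-γ - 1) = ((x+1) ^ (-γ) - x ^ (-γ)) / (x + 1 - x) := hder
  have h1 : x + 1 - x = 1 := by ring
  rw [h1, div_one] at hslope
  nlinarith [hmono, hslope]

lemma myTailNat (γ : ℝ) (hγ : 0 < γ) (n : ℕ) (hn : 1 ≤ n) :
    (∑' m : ℕ, ENNReal.ofReal (if n < m then (m:ℝ) ^ (-γ - 1) else 0))
      ≤ ENNReal.ofReal ((n:ℝ) ^ (-γ) / γ) := by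
  set t : ℕ → ℝ≥0∞ := fun m => ENNReal.ofReal (if n < m then (m:ℝ) ^ (-γ - 1) else 0) with ht
  have hinj : Function.Injective (fun j : ℕ => j + (n+1)) := add_left_injective _
  have hsupp : Function.support t ⊆ Set.range (fun j : ℕ => j + (n+1)) := by
    intro m hm
    rcases le_or_gt m n with h | h
    · exfalso; apply hm; simp [ht, Nat.not_lt.mpr h]
    · exact ⟨m - (n+1), by simp only []; omega⟩
  rw [← hinj.tsum_eq hsupp]
  set ψ : ℕ → ℝ := fun j => ((n + j : ℕ):ℝ) ^ (-γ) with hψ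
  have hψ0 : ∀ j, 0 ≤ ψ j := fun j => Real.rpow_nonneg (by positivity) _
  have hψanti : ∀ j : ℕ, ψ (j+1) ≤ ψ j := by
    intro j
    apply Real.rpow_le_rpow_of_nonpos (by exact_mod_cast Nat.pos_of_ne_zero (by omega))
      (by exact_mod_cast Nat.le_succ (n+j)) (by linarith)
  have hd : ∀ j : ℕ, t (j + (n+1)) ≤ ENNReal.ofReal ((ψ j - ψ (j+1)) / γ) := by
    intro j
    have hx : (1:ℝ) ≤ ((n + j : ℕ):ℝ) := by exact_mod_cast Nat.one_le_iff_ne_zero.mpr (by omega)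
    have hstep := myStep γ hγ hx
    have hcast : ((n + j : ℕ):ℝ) + 1 = ((n + j + 1 : ℕ):ℝ) := by push_cast; ring
    rw [hcast] at hstep
    have hidx : j + (n+1) = n + j + 1 := by omega
    have hcond : n < j + (n + 1) := by omega
    apply ENNReal.ofReal_le_ofReal
    rw [if_pos hcond, le_div_iff₀ hγ, hidx]
    calc ((n + j + 1 : ℕ):ℝ) ^ (-γ - 1) * γ = γ * ((n + j + 1 : ℕ):ℝ) ^ (-γ - 1) := by ring
      _ ≤ ((n + j : ℕ):ℝ) ^ (-γ) - ((n + j + 1 : ℕ):ℝ) ^ (-γ) := hstep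
      _ = ψ j - ψ (j+1) := rfl
  calc (∑' j : ℕ, t (j + (n+1))) ≤ ∑' j : ℕ, ENNReal.ofReal ((ψ j - ψ (j+1)) / γ) :=
        ENNReal.tsum_le_tsum hd
    _ ≤ ENNReal.ofReal ((n:ℝ) ^ (-γ) / γ) := by
        apply Summable.tsum_le_of_sum_le ENNReal.summable
        intro s
        obtain ⟨N, hN⟩ := s.exists_nat_subset_range
        have hdj : ∀ j : ℕ, 0 ≤ (ψ j - ψ (j+1)) / γ := fun j =>
          div_nonneg (by linarith [hψanti j]) (le_of_lt hγ)
        have h0 : ψ 0 = (n:ℝ) ^ (-γ) := by simp [hψ]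
        calc ∑ j ∈ s, ENNReal.ofReal ((ψ j - ψ (j+1)) / γ)
            ≤ ∑ j ∈ Finset.range N, ENNReal.ofReal ((ψ j - ψ (j+1)) / γ) :=
              Finset.sum_le_sum_of_subset hN
          _ = ENNReal.ofReal (∑ j ∈ Finset.range N, (ψ j - ψ (j+1)) / γ) :=
              (ENNReal.ofReal_sum_of_nonneg (fun j _ => hdj j)).symm
          _ ≤ ENNReal.ofReal ((n:ℝ) ^ (-γ) / γ) := by
              apply ENNReal.ofReal_le_ofReal
              rw [← Finset.sum_div, Finset.sum_range_sub' ψ, h0]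
              gcongr
              linarith [hψ0 N]

lemma myTailInt (γ : ℝ) (hγ : 0 < γ) (n : ℕ) (hn : 1 ≤ n) :
    (∑' z : ℤ, ENNReal.ofReal (if (n:ℤ) < |z| then |(z:ℝ)| ^ (-γ - 1) else 0))
      ≤ ENNReal.ofReal (2 * ((n:ℝ) ^ (-γ) / γ)) := by
  set f : ℤ → ℝ≥0∞ := fun z => ENNReal.ofReal (if (n:ℤ) < |z| then |(z:ℝ)| ^ (-γ - 1) else 0)
    with hf
  set g : ℤ → ℝ≥0∞ := fun z => if 0 ≤ z then f z else 0 with hg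
  set h : ℤ → ℝ≥0∞ := fun z => if z < 0 then f z else 0 with hh
  have hsplit : ∀ z, f z ≤ g z + h z := by
    intro z
    rcases le_or_gt 0 z with hz | hz
    · simp [hg, hh, hz, not_lt.mpr hz]
    · simp [hg, hh, hz, not_le.mpr hz]
  have hgsum : (∑' z : ℤ, g z) ≤ ENNReal.ofReal ((n:ℝ) ^ (-γ) / γ) := by
    have hinj : Function.Injective (fun m : ℕ => (m : ℤ)) := fun a b hab => Int.ofNat.inj hab
    have hsupp : Function.support g ⊆ Set.range (fun m : ℕ => (m : ℤ)) := by
      intro z hz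
      rcases le_or_gt 0 z with h0 | h0
      · exact ⟨z.toNat, by simp [Int.toNat_of_nonneg h0]⟩
      · exfalso; apply hz; simp [hg, not_le.mpr h0]
    rw [← hinj.tsum_eq hsupp]
    have : ∀ m : ℕ, g (m : ℤ) = ENNReal.ofReal (if n < m then (m:ℝ) ^ (-γ - 1) else 0) := by
      intro m
      have h1 : (0:ℤ) ≤ (m:ℤ) := Int.natCast_nonneg m
      have h2 : |(m:ℤ)| = (m:ℤ) := abs_of_nonneg h1
      have h3 : ((n:ℤ) < (m:ℤ)) = (n < m) := by simp
      have h4 : |((m:ℤ):ℝ)| = (m:ℝ) := by simp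
      simp only [hg, hf, if_pos h1, h2, h3, h4]
    calc (∑' m : ℕ, g (m:ℤ)) = ∑' m : ℕ, ENNReal.ofReal (if n < m then (m:ℝ) ^ (-γ - 1) else 0) :=
          tsum_congr this
      _ ≤ _ := myTailNat γ hγ n hn
  have hhsum : (∑' z : ℤ, h z) ≤ ENNReal.ofReal ((n:ℝ) ^ (-γ) / γ) := by
    have hinj : Function.Injective (fun m : ℕ => -((m:ℤ)) - 1) := by
      intro a b hab; simp only [] at hab; omega
    have hsupp : Function.support h ⊆ Set.range (fun m : ℕ => -((m:ℤ)) - 1) := by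
      intro z hz
      rcases lt_or_ge z 0 with h0 | h0
      · exact ⟨(-z - 1).toNat, by simp only []; omega⟩
      · exfalso; apply hz; simp [hh, not_lt.mpr h0]
    rw [← hinj.tsum_eq hsupp]
    have heq : ∀ m : ℕ, h (-(m:ℤ) - 1)
        = ENNReal.ofReal (if n < m + 1 then ((m+1:ℕ):ℝ) ^ (-γ - 1) else 0) := by
      intro m
      have h1 : (-(m:ℤ) - 1) < 0 := by omega
      have h2 : |(-(m:ℤ) - 1)| = ((m+1 : ℕ):ℤ) := by rw [abs_of_neg h1]; push_cast; ring
      have h3 : ((n:ℤ) < ((m+1:ℕ):ℤ)) = (n < m + 1) := by simp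
      have h4 : |((-(m:ℤ) - 1 : ℤ):ℝ)| = ((m+1:ℕ):ℝ) := by
        push_cast
        rw [abs_of_neg (by push_cast; linarith [Nat.cast_nonneg (α := ℝ) m] : (-(m:ℝ) - 1) < 0)]
        ring
      simp only [hh, hf, if_pos h1, h2, h3, h4]
    calc (∑' m : ℕ, h (-(m:ℤ) - 1))
        = ∑' m : ℕ, ENNReal.ofReal (if n < m + 1 then ((m+1:ℕ):ℝ) ^ (-γ - 1) else 0) :=
          tsum_congr heq
      _ ≤ ∑' m : ℕ, ENNReal.ofReal (if n < m then (m:ℝ) ^ (-γ - 1) else 0) :=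
          ENNReal.tsum_comp_le_tsum_of_injective (add_left_injective 1)
            (fun m => ENNReal.ofReal (if n < m then (m:ℝ) ^ (-γ - 1) else 0))
      _ ≤ _ := myTailNat γ hγ n hn
  calc (∑' z : ℤ, f z) ≤ ∑' z : ℤ, (g z + h z) := ENNReal.tsum_le_tsum hsplit
    _ = (∑' z : ℤ, g z) + ∑' z : ℤ, h z := ENNReal.tsum_add
    _ ≤ ENNReal.ofReal ((n:ℝ) ^ (-γ) / γ) + ENNReal.ofReal ((n:ℝ) ^ (-γ) / γ) :=
        add_le_add hgsum hhsum
    _ ≤ ENNReal.ofReal (2 * ((n:ℝ) ^ (-γ) / γ)) := by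
        rw [← ENNReal.ofReal_add (by positivity) (by positivity)]
        apply ENNReal.ofReal_le_ofReal; ring_nf; rfl

lemma cGamma_nonneg (γ : ℝ) : 0 ≤ cGamma γ := by
  apply inv_nonneg.mpr
  apply tsum_nonneg
  intro z
  split_ifs
  · exact le_refl 0
  · exact Real.rpow_nonneg (abs_nonneg _) _

lemma transP_nonneg (γ : ℝ) (z : ℤ) : 0 ≤ transP γ z := by
  unfold transP
  split_ifs
  · exact le_refl 0
  · exact mul_nonneg (cGamma_nonneg γ) (Real.rpow_nonneg (abs_nonneg _) _)

lemma ind_nonneg (b : Bool) : 0 ≤ ind b := by cases b <;> simp [ind]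
lemma ind_le_one (b : Bool) : ind b ≤ 1 := by cases b <;> simp [ind]

lemma cRate_nonneg (x y : ℤ) (η : Config) : 0 ≤ cRate x y η := by
  apply mul_nonneg
  · unfold ctilde
    have a1 := ind_nonneg (η (x-1)); have a2 := ind_nonneg (η (x+1))
    have a3 := ind_nonneg (η (y-1)); have a4 := ind_nonneg (η (y+1))
    linarith
  · unfold xiRate
    have h1 := ind_nonneg (η x); have h2 := ind_nonneg (η y)
    have h3 := ind_le_one (η x); have h4 := ind_le_one (η y)
    nlinarith

lemma cRate_le_four (x y : ℤ) (η : Config) : cRate x y η ≤ 4 := by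
  unfold cRate
  have h1 : ctilde x y η ≤ 4 := by
    unfold ctilde
    have := ind_le_one (η (x-1)); have := ind_le_one (η (x+1))
    have := ind_le_one (η (y-1)); have := ind_le_one (η (y+1))
    linarith
  have h2 : xiRate x y η ≤ 1 := by
    unfold xiRate; cases η x <;> cases η y <;> simp [ind]
  have h0 : 0 ≤ ctilde x y η := by
    unfold ctilde
    have a1 := ind_nonneg (η (x-1)); have a2 := ind_nonneg (η (x+1))
    have a3 := ind_nonneg (η (y-1)); have a4 := ind_nonneg (η (y+1))
    linarith
  have h3 : 0 ≤ xiRate x y η := by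
    have h1 := ind_nonneg (η x); have h2 := ind_nonneg (η y)
    have h3 := ind_le_one (η x); have h4 := ind_le_one (η y)
    unfold xiRate; nlinarith
  nlinarith

lemma indsq_le_one (x y : ℤ) (η : Config) : (ind (η x) - ind (η y))^2 ≤ 1 := by
  cases η x <;> cases η y <;> norm_num [ind]

set_option maxHeartbeats 2000000 in
lemma core (γ : ℝ) (hγ1 : 0 < γ) (G : ℝ → ℝ → ℝ) (s T : ℝ) (hs : s ∈ Set.Icc (0:ℝ) T)
    (M L A : ℝ) (hM0 : 0 ≤ M) (hL0 : 0 ≤ L) (hA1 : 1 ≤ A)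
    (hM : ∀ u, |G s u| ≤ M)
    (hLip : ∀ u v, |G s u - G s v| ≤ L * |u - v|)
    (hvan : ∀ u : ℝ, A ≤ |u| → G s u = 0)
    (a n : ℕ) (ha1 : 1 ≤ a) (haA : A ≤ (a:ℝ)) (hn : 1 ≤ n) (η : Config) :
    ENNReal.ofReal ((n : ℝ) ^ γ / (4 * (n : ℝ) ^ 2)) *
      (∑' q : ℤ × ℤ, ENNReal.ofReal
        ((G s ((q.2 : ℝ) / n) - G s ((q.1 : ℝ) / n)) ^ 2 * transP γ (q.1 - q.2) *
          cRate q.1 q.2 η * (ind (η q.1) - ind (η q.2)) ^ 2))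
      ≤ ENNReal.ofReal ((18*a*(cGamma γ)*L^2 + 48*a*(cGamma γ)*M^2/γ + 1) *
          max ((n : ℝ) ^ (γ - 2)) ((n : ℝ) ^ (-1 : ℝ))) := by
  have hN : (0:ℝ) < (n:ℝ) := by exact_mod_cast Nat.pos_of_ne_zero (by omega)
  set N := (n:ℝ) with hNdef
  set Cc := cGamma γ with hCcdef
  have hCc : 0 ≤ Cc := cGamma_nonneg γ
  set W : ℤ → ℝ := fun z => 4 * transP γ z * min (L^2 * (z:ℝ)^2 / N^2) (4*M^2) with hWdef
  have hmin0 : ∀ z : ℤ, 0 ≤ min (L^2 * (z:ℝ)^2 / N^2) (4*M^2) := by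
    intro z; apply le_min (by positivity) (by positivity)
  have hW0 : ∀ z, 0 ≤ W z := fun z =>
    mul_nonneg (mul_nonneg (by norm_num) (transP_nonneg γ z)) (hmin0 z)
  set S : Finset ℤ := Finset.Icc (-(a*n:ℤ)) (a*n) with hSdef
  set K := ∑' z : ℤ, ENNReal.ofReal (W z) with hKdef
  -- vanishing outside S
  have hvanS : ∀ x : ℤ, x ∉ S → G s ((x:ℝ)/N) = 0 := by
    intro x hx
    apply hvan
    rw [hSdef, Finset.mem_Icc] at hx
    push_neg at hx
    have h2 : (a*n:ℤ) < |x| := by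
      rcases le_or_gt (-(a*n:ℤ)) x with h | h
      · exact lt_of_lt_of_le (hx h) (le_abs_self x)
      · exact lt_of_lt_of_le (by linarith) (neg_le_abs x)
    have h3 : (a:ℝ) * N < |(x:ℝ)| := by
      rw [← Int.cast_abs, hNdef]
      push_cast
      exact_mod_cast h2
    rw [abs_div, abs_of_pos hN]
    rw [le_div_iff₀ hN]
    nlinarith
  -- termwise bound
  have htW : ∀ x y : ℤ,
      (G s ((y:ℝ)/N) - G s ((x:ℝ)/N)) ^ 2 * transP γ (x - y) *
        cRate x y η * (ind (η x) - ind (η y)) ^ 2 ≤ W (x - y) := by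
    intro x y
    have hp := transP_nonneg γ (x - y)
    have hΔ1 : |G s ((y:ℝ)/N) - G s ((x:ℝ)/N)| ≤ L * (|((x - y : ℤ):ℝ)| / N) := by
      have h0 := hLip ((y:ℝ)/N) ((x:ℝ)/N)
      have he : |(y:ℝ)/N - (x:ℝ)/N| = |((x - y : ℤ):ℝ)| / N := by
        rw [div_sub_div_same, abs_div, abs_of_pos hN, abs_sub_comm]
        push_cast
        ring_nf
      rw [he] at h0
      exact h0
    have hΔsq1 : (G s ((y:ℝ)/N) - G s ((x:ℝ)/N)) ^ 2 ≤ L^2 * ((x - y:ℤ):ℝ)^2 / N^2 := by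
      have h1 : (G s ((y:ℝ)/N) - G s ((x:ℝ)/N)) ^ 2
          = |G s ((y:ℝ)/N) - G s ((x:ℝ)/N)| ^ 2 := (sq_abs _).symm
      have h2 : (L * (|((x - y:ℤ):ℝ)| / N)) ^ 2 = L^2 * ((x - y:ℤ):ℝ)^2 / N^2 := by
        rw [mul_pow, div_pow, sq_abs]; ring
      rw [h1, ← h2]
      exact pow_le_pow_left₀ (abs_nonneg _) hΔ1 2
    have hΔsq2 : (G s ((y:ℝ)/N) - G s ((x:ℝ)/N)) ^ 2 ≤ 4*M^2 := by
      have h1 : |G s ((y:ℝ)/N) - G s ((x:ℝ)/N)| ≤ 2*M := by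
        calc |G s ((y:ℝ)/N) - G s ((x:ℝ)/N)| ≤ |G s ((y:ℝ)/N)| + |G s ((x:ℝ)/N)| :=
              abs_sub _ _
          _ ≤ 2*M := by linarith [hM ((y:ℝ)/N), hM ((x:ℝ)/N)]
      nlinarith [abs_nonneg (G s ((y:ℝ)/N) - G s ((x:ℝ)/N)), sq_abs (G s ((y:ℝ)/N) - G s ((x:ℝ)/N))]
    have h1 : (G s ((y:ℝ)/N) - G s ((x:ℝ)/N)) ^ 2 ≤ min (L^2 * ((x - y:ℤ):ℝ)^2 / N^2) (4*M^2) :=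
      le_min hΔsq1 hΔsq2
    calc (G s ((y:ℝ)/N) - G s ((x:ℝ)/N)) ^ 2 * transP γ (x - y) *
          cRate x y η * (ind (η x) - ind (η y)) ^ 2
        = ((G s ((y:ℝ)/N) - G s ((x:ℝ)/N)) ^ 2 * transP γ (x - y)) *
            (cRate x y η * (ind (η x) - ind (η y)) ^ 2) := by ring
      _ ≤ (min (L^2 * ((x - y:ℤ):ℝ)^2 / N^2) (4*M^2) * transP γ (x - y)) * (4 * 1) := by
          apply mul_le_mul
          · exact mul_le_mul_of_nonneg_right h1 hp
          · exact mul_le_mul (cRate_le_four x y η) (indsq_le_one x y η)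
              (sq_nonneg _) (by norm_num)
          · exact mul_nonneg (cRate_nonneg x y η) (sq_nonneg _)
          · exact mul_nonneg (hmin0 (x - y)) hp
      _ = W (x - y) := by rw [hWdef]; push_cast; ring
  -- ENNReal termwise bound
  have hterm : ∀ q : ℤ × ℤ,
      ENNReal.ofReal ((G s ((q.2:ℝ)/N) - G s ((q.1:ℝ)/N)) ^ 2 * transP γ (q.1 - q.2) *
          cRate q.1 q.2 η * (ind (η q.1) - ind (η q.2)) ^ 2)
        ≤ (if q.1 ∈ S then ENNReal.ofReal (W (q.1 - q.2)) else 0)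
          + (if q.2 ∈ S then ENNReal.ofReal (W (q.1 - q.2)) else 0) := by
    rintro ⟨x, y⟩
    simp only []
    by_cases hx : x ∈ S
    · calc ENNReal.ofReal _ ≤ ENNReal.ofReal (W (x - y)) :=
            ENNReal.ofReal_le_ofReal (htW x y)
        _ ≤ _ := by rw [if_pos hx]; exact le_self_add
    · by_cases hy : y ∈ S
      · calc ENNReal.ofReal _ ≤ ENNReal.ofReal (W (x - y)) :=
              ENNReal.ofReal_le_ofReal (htW x y)
          _ ≤ _ := by rw [if_pos hy]; exact le_add_self
      · rw [hvanS x hx, hvanS y hy]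
        simp
  -- first reindexed sum
  have hsum1 : (∑' q : ℤ × ℤ, (if q.1 ∈ S then ENNReal.ofReal (W (q.1 - q.2)) else 0))
      = (S.card : ℝ≥0∞) * K := by
    rw [ENNReal.tsum_prod']
    have hinner : ∀ x : ℤ, (∑' y : ℤ, ENNReal.ofReal (W (x - y))) = K := by
      intro x
      simpa using (Equiv.subLeft x).tsum_eq (fun z => ENNReal.ofReal (W z))
    calc (∑' (x : ℤ) (y : ℤ), (if x ∈ S then ENNReal.ofReal (W (x - y)) else 0))
        = ∑' x : ℤ, (if x ∈ S then K else 0) := by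
          refine tsum_congr fun x => ?_
          by_cases hx : x ∈ S
          · simp only [if_pos hx]; exact hinner x
          · simp [hx]
      _ = ∑ x ∈ S, (if x ∈ S then K else 0) := tsum_eq_sum (fun x hx => if_neg hx)
      _ = (S.card : ℝ≥0∞) * K := by
          rw [Finset.sum_congr rfl (fun x hx => if_pos hx), Finset.sum_const, nsmul_eq_mul]
  -- second reindexed sum
  have hsum2 : (∑' q : ℤ × ℤ, (if q.2 ∈ S then ENNReal.ofReal (W (q.1 - q.2)) else 0))
      = (S.card : ℝ≥0∞) * K := by
    rw [ENNReal.tsum_prod', ENNReal.tsum_comm]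
    have hinner : ∀ y : ℤ, (∑' x : ℤ, ENNReal.ofReal (W (x - y))) = K := by
      intro y
      simpa using (Equiv.subRight y).tsum_eq (fun z => ENNReal.ofReal (W z))
    calc (∑' (y : ℤ) (x : ℤ), (if y ∈ S then ENNReal.ofReal (W (x - y)) else 0))
        = ∑' y : ℤ, (if y ∈ S then K else 0) := by
          refine tsum_congr fun y => ?_
          by_cases hy : y ∈ S
          · simp only [if_pos hy]; exact hinner y
          · simp [hy]
      _ = ∑ y ∈ S, (if y ∈ S then K else 0) := tsum_eq_sum (fun y hy => if_neg hy)
      _ = (S.card : ℝ≥0∞) * K := by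
          rw [Finset.sum_congr rfl (fun y hy => if_pos hy), Finset.sum_const, nsmul_eq_mul]
  -- bound on K
  set c1 : ℝ := 4*Cc*L^2/N^2 with hc1def
  have hc1' : (0:ℝ) ≤ c1 := by rw [hc1def]; positivity
  set v1 : ℤ → ℝ := fun z => if z ≠ 0 ∧ |z| ≤ (n:ℤ) then |(z:ℝ)|^(-γ-1) * (z:ℝ)^2 else 0
    with hv1def
  set v2 : ℤ → ℝ := fun z => if (n:ℤ) < |z| then |(z:ℝ)|^(-γ-1) else 0 with hv2def
  have hmax0 : (0:ℝ) ≤ max 1 (N^(1-γ)) := le_trans zero_le_one (le_max_left _ _)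
  set Kr1 : ℝ := 12*Cc*L^2 * max 1 (N^(1-γ)) / N with hKr1def
  set Kr2 : ℝ := 16*Cc*M^2 * (2*(N^(-γ)/γ)) with hKr2def
  have hKr1' : 0 ≤ Kr1 := by
    rw [hKr1def]
    apply div_nonneg _ (le_of_lt hN)
    apply mul_nonneg (by positivity) hmax0
  have hKr2' : 0 ≤ Kr2 := by
    rw [hKr2def]
    have : (0:ℝ) ≤ N^(-γ) := Real.rpow_nonneg (le_of_lt hN) _
    positivity
  have hWu : ∀ z : ℤ, W z ≤ c1 * v1 z + 16*Cc*M^2 * v2 z := by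
    intro z
    have hrp : (0:ℝ) ≤ |(z:ℝ)|^(-γ-1) := Real.rpow_nonneg (abs_nonneg _) _
    by_cases hz0 : z = 0
    · subst hz0
      have h1 : transP γ (0:ℤ) = 0 := by simp [transP]
      have h2 : v1 0 = 0 := by rw [hv1def]; simp
      have h3 : v2 0 = 0 := by rw [hv2def]; simp
      rw [hWdef]
      simp only [h1, h2, h3, mul_zero, zero_mul, add_zero, zero_add]
      simp
    · have hPz : transP γ z = Cc * |(z:ℝ)|^(-γ-1) := by rw [transP, if_neg hz0, hCcdef]
      by_cases hzn : |z| ≤ (n:ℤ)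
      · have hv2z : v2 z = 0 := by rw [hv2def]; exact if_neg (not_lt.mpr hzn)
        have hv1z : v1 z = |(z:ℝ)|^(-γ-1) * (z:ℝ)^2 := by rw [hv1def]; exact if_pos ⟨hz0, hzn⟩
        rw [hv2z, mul_zero, add_zero, hWdef]
        simp only []
        rw [hPz]
        calc 4 * (Cc * |(z:ℝ)|^(-γ-1)) * min (L^2 * (z:ℝ)^2 / N^2) (4*M^2)
            ≤ 4 * (Cc * |(z:ℝ)|^(-γ-1)) * (L^2 * (z:ℝ)^2 / N^2) := by
              apply mul_le_mul_of_nonneg_left (min_le_left _ _) (by positivity)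
          _ = c1 * v1 z := by rw [hv1z, hc1def]; ring
      · have hv1z : v1 z = 0 := by
          rw [hv1def]; exact if_neg (fun h => hzn h.2)
        have hv2z : v2 z = |(z:ℝ)|^(-γ-1) := by rw [hv2def]; exact if_pos (not_le.mp hzn)
        rw [hv1z, mul_zero, zero_add, hWdef]
        simp only []
        rw [hPz]
        calc 4 * (Cc * |(z:ℝ)|^(-γ-1)) * min (L^2 * (z:ℝ)^2 / N^2) (4*M^2)
            ≤ 4 * (Cc * |(z:ℝ)|^(-γ-1)) * (4*M^2) := by
              apply mul_le_mul_of_nonneg_left (min_le_right _ _) (by positivity)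
          _ = 16*Cc*M^2 * v2 z := by rw [hv2z]; ring
  have hS1 : (∑' z : ℤ, ENNReal.ofReal (c1 * v1 z)) ≤ ENNReal.ofReal Kr1 := by
    have hvb : ∀ z ∈ Finset.Icc (-(n:ℤ)) (n:ℤ),
        ENNReal.ofReal (v1 z) ≤ ENNReal.ofReal (max 1 (N^(1-γ))) := by
      intro z _
      apply ENNReal.ofReal_le_ofReal
      rw [hv1def]
      simp only []
      by_cases h : z ≠ 0 ∧ |z| ≤ (n:ℤ)
      · rw [if_pos h]
        obtain ⟨hz0, hzn⟩ := h
        have hz1 : (1:ℝ) ≤ |(z:ℝ)| := by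
          rw [← Int.cast_abs]; exact_mod_cast Int.one_le_abs hz0
        have hzN : |(z:ℝ)| ≤ N := by
          rw [← Int.cast_abs, hNdef]; exact_mod_cast hzn
        have key : |(z:ℝ)|^(-γ-1) * (z:ℝ)^2 = |(z:ℝ)|^(1-γ) := by
          rw [← sq_abs, ← Real.rpow_natCast |(z:ℝ)| 2, ← Real.rpow_add (by linarith)]
          congr 1
          push_cast
          ring
        rw [key]
        rcases le_or_gt (1-γ) 0 with h1 | h1
        · exact le_max_of_le_left (Real.rpow_le_one_of_one_le_of_nonpos hz1 h1)
        · exact le_max_of_le_right (Real.rpow_le_rpow (abs_nonneg _) hzN (le_of_lt h1))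
      · rw [if_neg h]; exact le_max_of_le_left zero_le_one
    have hout : ∀ z : ℤ, z ∉ Finset.Icc (-(n:ℤ)) (n:ℤ) → ENNReal.ofReal (v1 z) = 0 := by
      intro z hz
      rw [Finset.mem_Icc] at hz
      have habs : ¬(|z| ≤ (n:ℤ)) := fun h => hz (abs_le.mp h)
      rw [hv1def]
      simp only [if_neg (fun h : z ≠ 0 ∧ |z| ≤ (n:ℤ) => habs h.2)]
      exact ENNReal.ofReal_zero
    have hcard : (Finset.Icc (-(n:ℤ)) (n:ℤ)).card = 2*n+1 := by
      rw [Int.card_Icc]; omega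
    calc (∑' z : ℤ, ENNReal.ofReal (c1 * v1 z))
        = ENNReal.ofReal c1 * ∑' z : ℤ, ENNReal.ofReal (v1 z) := by
          simp_rw [ENNReal.ofReal_mul hc1']; rw [ENNReal.tsum_mul_left]
      _ ≤ ENNReal.ofReal c1 * ENNReal.ofReal (3*N*(max 1 (N^(1-γ)))) := by
          apply mul_le_mul_right
          rw [tsum_eq_sum hout]
          calc ∑ z ∈ Finset.Icc (-(n:ℤ)) (n:ℤ), ENNReal.ofReal (v1 z)
              ≤ ∑ _z ∈ Finset.Icc (-(n:ℤ)) (n:ℤ), ENNReal.ofReal (max 1 (N^(1-γ))) :=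
                Finset.sum_le_sum hvb
            _ = ((2*n+1 : ℕ):ℝ≥0∞) * ENNReal.ofReal (max 1 (N^(1-γ))) := by
                rw [Finset.sum_const, hcard, nsmul_eq_mul]
            _ = ENNReal.ofReal (((2*n+1:ℕ):ℝ) * max 1 (N^(1-γ))) := by
                rw [ENNReal.ofReal_mul (by positivity), ENNReal.ofReal_natCast]
            _ ≤ ENNReal.ofReal (3*N*(max 1 (N^(1-γ)))) := by
                apply ENNReal.ofReal_le_ofReal
                apply mul_le_mul_of_nonneg_right _ hmax0
                rw [hNdef]
                push_cast
                have : (1:ℝ) ≤ (n:ℝ) := by exact_mod_cast hn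
                linarith
      _ = ENNReal.ofReal (c1 * (3*N*(max 1 (N^(1-γ))))) := (ENNReal.ofReal_mul hc1').symm
      _ = ENNReal.ofReal Kr1 := by
          rw [hc1def, hKr1def]
          congr 1
          field_simp
          ring
  have hS2 : (∑' z : ℤ, ENNReal.ofReal (16*Cc*M^2 * v2 z)) ≤ ENNReal.ofReal Kr2 := by
    have h16 : (0:ℝ) ≤ 16*Cc*M^2 := by positivity
    calc (∑' z : ℤ, ENNReal.ofReal (16*Cc*M^2 * v2 z))
        = ENNReal.ofReal (16*Cc*M^2) * ∑' z : ℤ, ENNReal.ofReal (v2 z) := by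
          simp_rw [ENNReal.ofReal_mul h16]; rw [ENNReal.tsum_mul_left]
      _ ≤ ENNReal.ofReal (16*Cc*M^2) * ENNReal.ofReal (2*((n:ℝ)^(-γ)/γ)) := by
          apply mul_le_mul_right
          rw [hv2def]
          exact myTailInt γ hγ1 n hn
      _ = ENNReal.ofReal Kr2 := by
          rw [← ENNReal.ofReal_mul h16, hKr2def, hNdef]
  have hK : K ≤ ENNReal.ofReal (Kr1 + Kr2) := by
    calc K ≤ ∑' z : ℤ, (ENNReal.ofReal (c1 * v1 z) + ENNReal.ofReal (16*Cc*M^2 * v2 z)) := by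
          rw [hKdef]
          apply ENNReal.tsum_le_tsum
          intro z
          calc ENNReal.ofReal (W z) ≤ ENNReal.ofReal (c1 * v1 z + 16*Cc*M^2 * v2 z) :=
                ENNReal.ofReal_le_ofReal (hWu z)
            _ ≤ _ := ENNReal.ofReal_add_le
      _ = (∑' z : ℤ, ENNReal.ofReal (c1 * v1 z)) + ∑' z : ℤ, ENNReal.ofReal (16*Cc*M^2 * v2 z) :=
          ENNReal.tsum_add
      _ ≤ ENNReal.ofReal Kr1 + ENNReal.ofReal Kr2 := add_le_add hS1 hS2
      _ = ENNReal.ofReal (Kr1 + Kr2) := (ENNReal.ofReal_add hKr1' hKr2').symm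
  -- final assembly
  have ha' : (1:ℝ) ≤ (a:ℝ) := by exact_mod_cast ha1
  have hn' : (1:ℝ) ≤ N := by rw [hNdef]; exact_mod_cast hn
  have hNne : N ≠ 0 := ne_of_gt hN
  have hγ0 : γ ≠ 0 := ne_of_gt hγ1
  have hcard : S.card = 2*(a*n)+1 := by
    have h : (((a:ℤ)*(n:ℤ)) + 1 - (-((a:ℤ)*(n:ℤ)))).toNat = 2*(a*n)+1 := by
      have hh : ((a:ℤ)*(n:ℤ)) = ((a*n:ℕ):ℤ) := by push_cast; ring
      rw [hh]; omega
    rw [hSdef, Int.card_Icc]; exact h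
  have hpref : (0:ℝ) ≤ N^γ/(4*N^2) := by positivity
  have h6 : (0:ℝ) ≤ 6*(a:ℝ)*N := by positivity
  calc ENNReal.ofReal (N ^ γ / (4 * N ^ 2)) *
      (∑' q : ℤ × ℤ, ENNReal.ofReal
        ((G s ((q.2 : ℝ) / N) - G s ((q.1 : ℝ) / N)) ^ 2 * transP γ (q.1 - q.2) *
          cRate q.1 q.2 η * (ind (η q.1) - ind (η q.2)) ^ 2))
      ≤ ENNReal.ofReal (N ^ γ / (4 * N ^ 2)) *
        (∑' q : ℤ × ℤ, ((if q.1 ∈ S then ENNReal.ofReal (W (q.1 - q.2)) else 0)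
          + (if q.2 ∈ S then ENNReal.ofReal (W (q.1 - q.2)) else 0))) :=
        mul_le_mul_right (ENNReal.tsum_le_tsum hterm) _
    _ = ENNReal.ofReal (N ^ γ / (4 * N ^ 2)) * ((S.card : ℝ≥0∞) * K + (S.card : ℝ≥0∞) * K) := by
        rw [ENNReal.tsum_add, hsum1, hsum2]
    _ ≤ ENNReal.ofReal (N ^ γ / (4 * N ^ 2)) *
        (ENNReal.ofReal (6*(a:ℝ)*N) * ENNReal.ofReal (Kr1 + Kr2)) := by
        apply mul_le_mul_right
        calc (S.card : ℝ≥0∞) * K + (S.card : ℝ≥0∞) * K = ((2*S.card : ℕ) : ℝ≥0∞) * K := by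
              push_cast; ring
          _ ≤ ENNReal.ofReal (6*(a:ℝ)*N) * ENNReal.ofReal (Kr1 + Kr2) := by
              apply mul_le_mul' _ hK
              rw [← ENNReal.ofReal_natCast]
              apply ENNReal.ofReal_le_ofReal
              rw [hcard]
              push_cast
              have hna : (1:ℝ) ≤ (a:ℝ)*N := by nlinarith
              nlinarith
    _ = ENNReal.ofReal ((N ^ γ / (4 * N ^ 2)) * (6*(a:ℝ)*N * (Kr1 + Kr2))) := by
        rw [← ENNReal.ofReal_mul h6, ← ENNReal.ofReal_mul hpref]
    _ ≤ ENNReal.ofReal ((18*a*Cc*L^2 + 48*a*Cc*M^2/γ + 1) * max (N ^ (γ - 2)) (N ^ (-1 : ℝ))) := by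
        apply ENNReal.ofReal_le_ofReal
        rw [hKr1def, hKr2def]
        have e1 : N^γ = N^(γ-2) * N^2 := by
          rw [← Real.rpow_natCast N 2, ← Real.rpow_add hN]
          congr 1
          push_cast
          ring
        have e2 : N^(γ-2) * N^(1-γ) = N^(-1:ℝ) := by
          rw [← Real.rpow_add hN]; congr 1; ring
        have e3 : N^(-γ) = N^(1-γ)/N := by
          rw [eq_div_iff hNne]
          nth_rewrite 2 [← Real.rpow_one N]
          rw [← Real.rpow_add hN]
          congr 1
          ring
        have expand : N^γ/(4*N^2) * (6*(a:ℝ)*N *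
            (12*Cc*L^2 * max 1 (N^(1-γ)) / N + 16*Cc*M^2*(2*(N^(-γ)/γ))))
            = 18*(a:ℝ)*Cc*L^2*(N^(γ-2) * max 1 (N^(1-γ)))
              + 48*(a:ℝ)*Cc*M^2/γ*(N^(γ-2) * N^(1-γ)) := by
          rw [e1, e3]
          field_simp
          ring
        rw [expand]
        have hP0 : (0:ℝ) ≤ N^(γ-2) := Real.rpow_nonneg (le_of_lt hN) _
        have hR0 : (0:ℝ) ≤ N^(-1:ℝ) := Real.rpow_nonneg (le_of_lt hN) _
        have key : N^(γ-2) * max 1 (N^(1-γ)) = max (N^(γ-2)) (N^(-1:ℝ)) := by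
          rw [mul_max_of_nonneg _ _ hP0, mul_one, e2]
        rw [key, e2]
        have hmaxnn : (0:ℝ) ≤ max (N^(γ-2)) (N^(-1:ℝ)) := le_trans hR0 (le_max_right _ _)
        have hRmax : N^(-1:ℝ) ≤ max (N^(γ-2)) (N^(-1:ℝ)) := le_max_right _ _
        have hc2 : (0:ℝ) ≤ 48*(a:ℝ)*Cc*M^2/γ := by positivity
        have hc1 : (0:ℝ) ≤ 18*(a:ℝ)*Cc*L^2 := by positivity
        nlinarith [mul_le_mul_of_nonneg_left hRmax hc2, hmaxnn]

lemma testS_bounds (G : ℝ → ℝ → ℝ) (hG : IsTestS G) (T : ℝ) (hT : 0 < T) :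
    ∃ M L A : ℝ, 0 ≤ M ∧ 0 ≤ L ∧ 1 ≤ A ∧
      (∀ s ∈ Set.Icc (0:ℝ) T, ∀ u, |G s u| ≤ M) ∧
      (∀ s ∈ Set.Icc (0:ℝ) T, ∀ u v, |G s u - G s v| ≤ L * |u - v|) ∧
      (∀ s u : ℝ, A ≤ |u| → G s u = 0) := by
  obtain ⟨k, Gj, hGj, hGform⟩ := hG
  have hBex : ∀ j, ∃ B : ℝ, 0 ≤ B ∧ (j ≤ k → ∀ u, |Gj j u| ≤ B) := by
    intro j
    by_cases hj : j ≤ k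
    · obtain ⟨C, hC⟩ := (hGj j hj).2.exists_bound_of_continuous (hGj j hj).1.continuous
      refine ⟨max C 0, le_max_right _ _, fun _ u => ?_⟩
      exact le_max_of_le_left (by simpa using hC u)
    · exact ⟨0, le_refl _, fun h => absurd h hj⟩
  choose B hB0 hB using hBex
  have hLex : ∀ j, ∃ l : ℝ, 0 ≤ l ∧ (j ≤ k → ∀ u v, |Gj j u - Gj j v| ≤ l * |u - v|) := by
    intro j
    by_cases hj : j ≤ k
    · obtain ⟨K, hK⟩ :=
        ContDiff.lipschitzWith_of_hasCompactSupport (hGj j hj).2 (hGj j hj).1 (by simp)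
      refine ⟨K, K.coe_nonneg, fun _ u v => ?_⟩
      simpa [Real.dist_eq] using hK.dist_le_mul u v
    · exact ⟨0, le_refl _, fun h => absurd h hj⟩
  choose Lj hLj0 hLj using hLex
  have hAex : ∀ j, ∃ A : ℝ, 0 ≤ A ∧ (j ≤ k → ∀ u, A ≤ |u| → Gj j u = 0) := by
    intro j
    by_cases hj : j ≤ k
    · obtain ⟨r, hr⟩ := ((hGj j hj).2.isBounded).subset_closedBall 0
      refine ⟨max r 0 + 1, by positivity, fun _ u hu => ?_⟩
      apply image_eq_zero_of_notMem_tsupport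
      intro hmem
      have := hr hmem
      rw [Metric.mem_closedBall, Real.dist_eq, sub_zero] at this
      have : |u| ≤ max r 0 := le_trans this (le_max_left _ _)
      linarith
    · exact ⟨0, le_refl _, fun h => absurd h hj⟩
  choose Aj hAj0 hAj using hAex
  set Q := max T 1 with hQ
  have hQ1 : (1:ℝ) ≤ Q := le_max_right _ _
  refine ⟨∑ j ∈ Finset.range (k+1), Q^j * B j, ∑ j ∈ Finset.range (k+1), Q^j * Lj j,
    1 + ∑ j ∈ Finset.range (k+1), Aj j, ?_, ?_, ?_, ?_, ?_, ?_⟩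
  · exact Finset.sum_nonneg fun j _ => mul_nonneg (by positivity) (hB0 j)
  · exact Finset.sum_nonneg fun j _ => mul_nonneg (by positivity) (hLj0 j)
  · have := Finset.sum_nonneg (s := Finset.range (k+1)) fun j _ => hAj0 j
    linarith
  · intro s hs u
    rw [hGform]
    refine le_trans (Finset.abs_sum_le_sum_abs _ _) (Finset.sum_le_sum fun j hj => ?_)
    rw [abs_mul, abs_pow]
    have h1 : |s| ^ j ≤ Q ^ j := by
      apply pow_le_pow_left₀ (abs_nonneg s)
      rw [abs_of_nonneg hs.1]; exact le_trans hs.2 (le_max_left _ _)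
    exact mul_le_mul h1 (hB j (Finset.mem_range_succ_iff.mp hj) u) (abs_nonneg _) (by positivity)
  · intro s hs u v
    rw [hGform, hGform, ← Finset.sum_sub_distrib]
    have : ∀ j ∈ Finset.range (k+1), s^j * Gj j u - s^j * Gj j v = s^j * (Gj j u - Gj j v) :=
      fun j _ => by ring
    rw [Finset.sum_congr rfl this, Finset.sum_mul]
    refine le_trans (Finset.abs_sum_le_sum_abs _ _) (Finset.sum_le_sum fun j hj => ?_)
    rw [abs_mul, abs_pow, mul_assoc]
    have h1 : |s| ^ j ≤ Q ^ j := by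
      apply pow_le_pow_left₀ (abs_nonneg s)
      rw [abs_of_nonneg hs.1]; exact le_trans hs.2 (le_max_left _ _)
    exact mul_le_mul h1 (hLj j (Finset.mem_range_succ_iff.mp hj) u v) (abs_nonneg _) (by positivity)
  · intro s u hu
    rw [hGform]
    apply Finset.sum_eq_zero
    intro j hj
    have hAjA : Aj j ≤ 1 + ∑ i ∈ Finset.range (k+1), Aj i := by
      have h1 : Aj j ≤ ∑ i ∈ Finset.range (k+1), Aj i :=
        Finset.single_le_sum (fun i _ => hAj0 i) hj
      linarith
    rw [hAj j (Finset.mem_range_succ_iff.mp hj) u (le_trans hAjA hu), mul_zero]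


/-- bound on the quadratic variation term. -/
theorem statement13 (γ T : ℝ) (hγ : γ ∈ Set.Ioo (0 : ℝ) 2) (hT : 0 < T)
    (G : ℝ → ℝ → ℝ) (hG : IsTestS G) :
    ∃ C : ℝ, 0 < C ∧ ∀ n : ℕ, 1 ≤ n → ∀ η : Config,
      (⨆ s ∈ Set.Icc (0 : ℝ) T,
        ENNReal.ofReal ((n : ℝ) ^ γ / (4 * (n : ℝ) ^ 2)) *
          ∑' q : ℤ × ℤ, ENNReal.ofReal
            ((G s ((q.2 : ℝ) / n) - G s ((q.1 : ℝ) / n)) ^ 2 * transP γ (q.1 - q.2) *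
              cRate q.1 q.2 η * (ind (η q.1) - ind (η q.2)) ^ 2))
      ≤ ENNReal.ofReal (C * max ((n : ℝ) ^ (γ - 2)) ((n : ℝ) ^ (-1 : ℝ))) := by
  obtain ⟨hγ1, hγ2⟩ := hγ
  obtain ⟨M, L, A, hM0, hL0, hA1, hM, hLip, hvan⟩ := testS_bounds G hG T hT
  set a : ℕ := ⌈A⌉₊ with hadef
  have ha1 : 1 ≤ a := by
    rw [hadef]
    exact Nat.ceil_pos.mpr (lt_of_lt_of_le one_pos hA1)
  have haA : A ≤ (a:ℝ) := Nat.le_ceil A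
  refine ⟨18*a*(cGamma γ)*L^2 + 48*a*(cGamma γ)*M^2/γ + 1, ?_, ?_⟩
  · have hCc : 0 ≤ cGamma γ := cGamma_nonneg γ
    have h1 : (0:ℝ) ≤ 18*a*(cGamma γ)*L^2 := by positivity
    have h2 : (0:ℝ) ≤ 48*a*(cGamma γ)*M^2/γ := div_nonneg (by positivity) (le_of_lt hγ1)
    linarith
  · intro n hn η
    apply iSup₂_le
    intro s hs
    exact core γ hγ1 G s T hs M L A hM0 hL0 hA1 (hM s hs) (hLip s hs) (hvan s) a n ha1 haA hn η
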